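/- Fix real parameters α, β, γ with α ≠ 0. Let H(x,y,z) = x²/2 − αz, let J(x,y,z) be the skew-symmetric matrix with J₁₂ = z, J₁₃ = −y(1 + z/(2α)), J₂₃ = 0, and let R(x,y,z) = (1/α) times the symmetric matrix with entries R₁₁ = α², R₁₂ = 0, R₁₃ = yz/2, R₂₂ = 0, R₂₃ = γy, R₃₃ = −βz. Then for every (x,y,z) ∈ ℝ³, (J − R)∇H = (αy − αx + yz, γy − xz, xy − βz), i.e. the modified Lü system is a resistive-Hamiltonian system. Moreover ∇H·((J−R)∇H) = −α(x² − βz) + xyz and the divergence of this vector field is identically −α − β + γ. -/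

import Mathlib

set_option linter.unusedVariables false

open Matrix

/-- Partial derivative with respect to the first variable. -/
noncomputable def pd1 (f : ℝ → ℝ → ℝ → ℝ) (x y z : ℝ) : ℝ := deriv (fun t => f t y z) x
/-- Partial derivative with respect to the second variable. -/
noncomputable def pd2 (f : ℝ → ℝ → ℝ → ℝ) (x y z : ℝ) : ℝ := deriv (fun t => f x t z) y
/-- Partial derivative with respect to the third variable. -/
noncomputable def pd3 (f : ℝ → ℝ → ℝ → ℝ) (x y z : ℝ) : ℝ := deriv (fun t => f x y t) z

/-- Hamiltonian of the modified Lü system. -/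
noncomputable def H (α : ℝ) (x y z : ℝ) : ℝ := x ^ 2 / 2 - α * z

/-- Gradient of `H`. -/
noncomputable def gradH (α : ℝ) (x y z : ℝ) : Fin 3 → ℝ :=
  ![pd1 (H α) x y z, pd2 (H α) x y z, pd3 (H α) x y z]

/-- Poisson matrix of the modified Lü system. -/
noncomputable def Jmat (α : ℝ) (x y z : ℝ) : Matrix (Fin 3) (Fin 3) ℝ :=
  !![0, z, -y * (1 + z / (2 * α)); -z, 0, 0; y * (1 + z / (2 * α)), 0, 0]

/-- Resistance matrix of the modified Lü system. -/
noncomputable def Rmat (α β γ : ℝ) (x y z : ℝ) : Matrix (Fin 3) (Fin 3) ℝ :=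
  (1 / α) • !![α ^ 2, 0, y * z / 2; 0, 0, γ * y; y * z / 2, γ * y, -β * z]

/-- The resistive-Hamiltonian vector field `(J − R)∇H`. -/
noncomputable def F (α β γ : ℝ) (x y z : ℝ) : Fin 3 → ℝ :=
  (Jmat α x y z - Rmat α β γ x y z).mulVec (gradH α x y z)

lemma gradH_eq (α x y z : ℝ) : gradH α x y z = ![x, 0, -α] := by
  unfold gradH pd1 pd2 pd3 H
  have h1 : deriv (fun t : ℝ => t ^ 2 / 2 - α * z) x = x := by
    rw [deriv_sub_const, deriv_div_const, deriv_pow_field]; ring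
  have h2 : deriv (fun _ : ℝ => x ^ 2 / 2 - α * z) y = 0 := deriv_const _ _
  have h3 : deriv (fun t : ℝ => x ^ 2 / 2 - α * t) z = -α := by
    rw [deriv_const_sub, deriv_const_mul _ differentiableAt_fun_id, deriv_id'']; ring
  rw [h1, h2, h3]

lemma F_eq (α β γ : ℝ) (hα : α ≠ 0) (x y z : ℝ) :
    F α β γ x y z = ![α * y - α * x + y * z, γ * y - x * z, x * y - β * z] := by
  unfold F Jmat Rmat
  rw [gradH_eq]
  funext i
  fin_cases i <;>
    simp [mulVec, dotProduct, Fin.sum_univ_three] <;> field_simp <;> ring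

/-- The modified Lü system (with `α ≠ 0`) is a resistive-Hamiltonian system:
`(J − R)∇H` gives its equations of motion; moreover
`∇H·((J−R)∇H) = −α(x² − βz) + xyz` and the divergence of the vector field is
identically `−α − β + γ`. -/
theorem stmt_12 (α β γ : ℝ) (hα : α ≠ 0) :
    (∀ x y z : ℝ, F α β γ x y z =
      ![α * y - α * x + y * z, γ * y - x * z, x * y - β * z]) ∧
    (∀ x y z : ℝ, gradH α x y z ⬝ᵥ F α β γ x y z = -α * (x ^ 2 - β * z) + x * y * z) ∧
    (∀ x y z : ℝ,
      pd1 (fun x y z => F α β γ x y z 0) x y z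
        + pd2 (fun x y z => F α β γ x y z 1) x y z
        + pd3 (fun x y z => F α β γ x y z 2) x y z = -α - β + γ) := by
  refine ⟨fun x y z => F_eq α β γ hα x y z, ?_, ?_⟩
  · intro x y z
    rw [gradH_eq, F_eq α β γ hα]
    simp [dotProduct, Fin.sum_univ_three]
    ring
  · intro x y z
    unfold pd1 pd2 pd3
    have e1 : (fun t => F α β γ t y z 0) = fun t => α * y - α * t + y * z := by
      funext t; rw [F_eq α β γ hα]; simp
    have e2 : (fun t => F α β γ x t z 1) = fun t => γ * t - x * z := by
      funext t; rw [F_eq α β γ hα]; simp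
    have e3 : (fun t => F α β γ x y t 2) = fun t => x * y - β * t := by
      funext t; rw [F_eq α β γ hα]; simp
    rw [e1, e2, e3]
    have d1 : deriv (fun t : ℝ => α * y - α * t + y * z) x = -α := by
      rw [deriv_add_const, deriv_const_sub, deriv_const_mul _ differentiableAt_fun_id, deriv_id'']; ring
    have d2 : deriv (fun t : ℝ => γ * t - x * z) y = γ := by
      rw [deriv_sub_const, deriv_const_mul _ differentiableAt_fun_id, deriv_id'']; ring
    have d3 : deriv (fun t : ℝ => x * y - β * t) z = -β := by
      rw [deriv_const_sub, deriv_const_mul _ differentiableAt_fun_id, deriv_id'']; ring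
    rw [d1, d2, d3]; ring
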